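/- Let 0 < k < 1, R_s > 0 and x ∈ ℝ² with (1−k)R_s < k‖x‖ < (1+k)R_s, and assume additionally that d² + r₁² > r₂² and d² + r₂² > r₁², where r₁ = R_s, r₂ = k‖x‖/(1−k²) and d = k²‖x‖/(1−k²). If U is a random point uniformly distributed on the closed disk closedBall(x, R_s) ⊂ ℝ², then P(‖U − x‖ ≤ k‖U‖) = C(r₁, r₂, d) / (π R_s²), where C is the circle-intersection area function. -/

import Mathlib

/-!
By the Apollonius construction, `‖t - x‖ ≤ k‖t‖` is the closed disk of radius
`r₂ = k‖x‖/(1-k²)` about `(1-k²)⁻¹ • x`, whose center lies at distance `d = k²‖x‖/(1-k²)`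
from `x`; so the probability is the area of the lens cut out of `closedBall x R_s` by that disk,
divided by `π R_s²`. The radical axis of the two circles splits the lens into two circular
segments, whose chords lie at distances `m₁ = (d² + r₁² - r₂²)/(2d)` and `m₂ = d - m₁` from the
two centers. The area `r² arccos(a/r) - a√(r² - a²)` of a segment is computed in coordinates
adapted to its axis, by Fubini and the substitution `u = r sin θ`; for `0 < a` the arccos terms
become the arctan terms of `C(r₁, r₂, d)`.
-/

open Metric MeasureTheory Real

/-- The auxiliary quantity `t(r₁, r₂, d)` of the circle-intersection formula. -/
noncomputable def lensT (r₁ r₂ d : ℝ) : ℝ :=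
  Real.sqrt ((d + r₁ + r₂) * (d + r₁ - r₂) * (d - r₁ + r₂) * (-d + r₁ + r₂))

/-- The circle-intersection (lens) area function `C(r₁, r₂, d)`. -/
noncomputable def lensArea (r₁ r₂ d : ℝ) : ℝ :=
  r₁ ^ 2 * Real.arctan (lensT r₁ r₂ d / (d ^ 2 + r₁ ^ 2 - r₂ ^ 2)) +
    r₂ ^ 2 * Real.arctan (lensT r₁ r₂ d / (d ^ 2 - r₁ ^ 2 + r₂ ^ 2)) -
    lensT r₁ r₂ d / 2

theorem norm_inv_dist_smul_sub {E : Type*} [NormedAddCommGroup E] [NormedSpace ℝ E]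
    {a b : E} (hab : a ≠ b) : ‖(dist a b)⁻¹ • (b - a)‖ = 1 := by
  rw [norm_smul, ← dist_eq_norm', norm_inv, Real.norm_of_nonneg dist_nonneg,
    inv_mul_cancel₀ (dist_ne_zero.2 hab)]

section InnerProductSpace

variable {E : Type*} [NormedAddCommGroup E] [InnerProductSpace ℝ E]

theorem setOf_norm_sub_le_mul_norm_eq_closedBall (x : E) {k : ℝ} (hk0 : 0 ≤ k) (hk1 : k < 1) :
    {t : E | ‖t - x‖ ≤ k * ‖t‖} = closedBall ((1 - k ^ 2)⁻¹ • x) (k * ‖x‖ / (1 - k ^ 2)) := by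
  have hk : 0 < 1 - k ^ 2 := by nlinarith
  ext t
  have key : ‖t - x‖ ^ 2 - (k * ‖t‖) ^ 2 =
      (1 - k ^ 2) * (‖t - (1 - k ^ 2)⁻¹ • x‖ ^ 2 - (k * ‖x‖ / (1 - k ^ 2)) ^ 2) := by
    rw [norm_sub_sq_real, norm_sub_sq_real, real_inner_smul_right, norm_smul,
      Real.norm_of_nonneg (inv_nonneg.2 hk.le)]
    field_simp
    ring
  rw [Set.mem_ofPred_eq, mem_closedBall, dist_eq_norm,
    ← sq_le_sq₀ (norm_nonneg _) (by positivity),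
    ← sq_le_sq₀ (norm_nonneg _) (by positivity), ← sub_nonpos, ← sub_nonpos (a := ‖_‖ ^ 2), key]
  constructor <;> intro h <;> nlinarith

variable [FiniteDimensional ℝ E] [MeasurableSpace E] [BorelSpace E]

theorem MeasureTheory.Measure.addHaar_setOf_inner_sub_eq (μ : Measure E) [μ.IsAddHaarMeasure]
    (a : E) {u : E} (hu : u ≠ 0) (c : ℝ) :
    μ {y | inner ℝ (y - a) u = c} = 0 := by
  have hH : {y | inner ℝ (y - a) u = c} =
      (AffineSubspace.mk' (a + (c / ‖u‖ ^ 2) • u) (ℝ ∙ u)ᗮ : Set E) := by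
    ext y
    rw [SetLike.mem_coe, AffineSubspace.mem_mk', vsub_eq_sub,
      Submodule.mem_orthogonal_singleton_iff_inner_left, sub_add_eq_sub_sub, inner_sub_left,
      real_inner_smul_left, real_inner_self_eq_norm_sq,
      div_mul_cancel₀ _ (pow_ne_zero 2 (norm_ne_zero_iff.2 hu)), sub_eq_zero, Set.mem_ofPred_eq]
  rw [hH]
  refine Measure.addHaar_affineSubspace μ _ fun htop => hu ?_
  have := congrArg AffineSubspace.direction htop
  rwa [AffineSubspace.direction_mk', AffineSubspace.direction_top,
    Submodule.orthogonal_eq_top_iff, Submodule.span_singleton_eq_bot] at this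

theorem MeasureTheory.Measure.addHaar_closedBall_inter_closedBall_eq_add (μ : Measure E)
    [μ.IsAddHaarMeasure] {a b : E} (hab : a ≠ b) {r₁ r₂ : ℝ} (hr₁ : 0 ≤ r₁) (hr₂ : 0 ≤ r₂) :
    μ (closedBall a r₁ ∩ closedBall b r₂) =
      μ (closedBall a r₁ ∩ {y | (dist a b ^ 2 + r₁ ^ 2 - r₂ ^ 2) / (2 * dist a b) ≤
          inner ℝ (y - a) ((dist a b)⁻¹ • (b - a))}) +
      μ (closedBall b r₂ ∩ {y | (dist a b ^ 2 - r₁ ^ 2 + r₂ ^ 2) / (2 * dist a b) ≤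
          inner ℝ (y - b) ((dist a b)⁻¹ • (a - b))}) := by
  set d := dist a b
  have hd : 0 < d := dist_pos.2 hab
  set u := d⁻¹ • (b - a)
  have hba : b - a = d • u := (smul_inv_smul₀ hd.ne' _).symm
  have hu : ‖u‖ = 1 := norm_inv_dist_smul_sub hab
  set m₁ := (d ^ 2 + r₁ ^ 2 - r₂ ^ 2) / (2 * d)
  have hdm : 2 * d * m₁ = d ^ 2 + r₁ ^ 2 - r₂ ^ 2 := mul_div_cancel₀ _ (by positivity)
  have hm₂ : (d ^ 2 - r₁ ^ 2 + r₂ ^ 2) / (2 * d) = d - m₁ := by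
    rw [eq_sub_iff_add_eq, ← add_div, div_eq_iff (by positivity)]; ring
  have hyb (y : E) : y - b = (y - a) - d • u := by rw [← hba]; abel
  have hinner (y : E) : inner ℝ (y - b) (d⁻¹ • (a - b)) = d - inner ℝ (y - a) u := by
    rw [show d⁻¹ • (a - b) = -u by rw [← neg_sub, smul_neg], hyb, inner_neg_right,
      inner_sub_left, real_inner_smul_left, real_inner_self_eq_norm_sq, hu]
    ring
  have hnorm (y : E) : ‖y - b‖ ^ 2 = ‖y - a‖ ^ 2 - 2 * d * inner ℝ (y - a) u + d ^ 2 := by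
    rw [hyb, norm_sub_sq_real, real_inner_smul_right, norm_smul, Real.norm_of_nonneg hd.le, hu]
    ring
  rw [hm₂]
  have hsplit : closedBall a r₁ ∩ closedBall b r₂ =
      (closedBall a r₁ ∩ {y | m₁ ≤ inner ℝ (y - a) u}) ∪
        (closedBall b r₂ ∩ {y | d - m₁ ≤ inner ℝ (y - b) (d⁻¹ • (a - b))}) := by
    ext y
    simp only [Set.mem_inter_iff, Set.mem_union, mem_closedBall, dist_eq_norm, Set.mem_ofPred_eq,
      hinner, ← sq_le_sq₀ (norm_nonneg _) hr₁, ← sq_le_sq₀ (norm_nonneg _) hr₂, hnorm]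
    constructor
    · rintro ⟨hy₁, hy₂⟩
      rcases le_total m₁ (inner ℝ (y - a) u) with h | h
      · exact Or.inl ⟨hy₁, h⟩
      · exact Or.inr ⟨hy₂, by linarith⟩
    · rintro (⟨hy₁, h⟩ | ⟨hy₂, h⟩)
      · exact ⟨hy₁, by nlinarith⟩
      · exact ⟨by nlinarith, hy₂⟩
  refine hsplit ▸ measure_union₀ (by measurability) (measure_mono_null ?_
    (addHaar_setOf_inner_sub_eq μ a (norm_ne_zero_iff.1 (hu.trans_ne one_ne_zero)) m₁))
  rintro y ⟨⟨_, hy₁⟩, ⟨_, hy₂⟩⟩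
  rw [Set.mem_ofPred_eq, hinner] at hy₂
  exact le_antisymm (by linarith) hy₁

end InnerProductSpace

noncomputable def circularSegmentArea (r a : ℝ) : ℝ :=
  r ^ 2 * arccos (a / r) - a * √(r ^ 2 - a ^ 2)

theorem integral_two_mul_sqrt_sq_sub_sq {r a : ℝ} (hr : 0 < r) (ha : -r ≤ a) (har : a ≤ r) :
    ∫ u in a..r, 2 * √(r ^ 2 - u ^ 2) = circularSegmentArea r a := by
  set α := arcsin (a / r)
  have hsin : sin α = a / r := sin_arcsin ((le_div_iff₀ hr).2 (by linarith)) ((div_le_one hr).2 har)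
  have hα : α ≤ π / 2 := arcsin_le_pi_div_two _
  have hcos_nonneg : ∀ θ ∈ Set.uIcc α (π / 2), 0 ≤ cos θ := by
    rw [Set.uIcc_of_le hα]
    exact fun θ hθ => cos_nonneg_of_mem_Icc ⟨(neg_pi_div_two_le_arcsin _).trans hθ.1, hθ.2⟩
  calc ∫ u in a..r, 2 * √(r ^ 2 - u ^ 2)
      = ∫ u in r * sin α..r * sin (π / 2), 2 * √(r ^ 2 - u ^ 2) := by
        rw [hsin, sin_pi_div_two, mul_div_cancel₀ _ hr.ne', mul_one]
    _ = ∫ θ in α..π / 2, 2 * √(r ^ 2 - (r * sin θ) ^ 2) * (r * cos θ) :=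
        (intervalIntegral.integral_comp_mul_deriv (fun θ _ => (hasDerivAt_sin θ).const_mul r)
          (by fun_prop) (by fun_prop)).symm
    _ = ∫ θ in α..π / 2, 2 * r ^ 2 * cos θ ^ 2 := by
        refine intervalIntegral.integral_congr fun θ hθ => ?_
        have : r ^ 2 - (r * sin θ) ^ 2 = (r * cos θ) ^ 2 := by
          linear_combination -r ^ 2 * sin_sq_add_cos_sq θ
        rw [this, sqrt_sq (mul_nonneg hr.le (hcos_nonneg θ hθ))]
        ring
    _ = circularSegmentArea r a := by
        have hcos : cos α = √(r ^ 2 - a ^ 2) / r := by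
          rw [cos_arcsin, div_pow, one_sub_div (by positivity), sqrt_div' _ (sq_nonneg r),
            sqrt_sq hr.le]
        rw [intervalIntegral.integral_const_mul, integral_cos_sq, cos_pi_div_two, sin_pi_div_two,
          hsin, hcos, circularSegmentArea, arccos_eq_pi_div_two_sub_arcsin]
        field_simp
        ring

theorem circularSegmentArea_nonneg {r a : ℝ} (hr : 0 < r) (ha : -r ≤ a) (har : a ≤ r) :
    0 ≤ circularSegmentArea r a := by
  rw [← integral_two_mul_sqrt_sq_sub_sq hr ha har]
  exact intervalIntegral.integral_nonneg har fun _ _ => by positivity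

theorem circularSegmentArea_eq_arctan {r a : ℝ} (hr : 0 < r) (ha : 0 < a) :
    circularSegmentArea r a = r ^ 2 * arctan (√(r ^ 2 - a ^ 2) / a) - a * √(r ^ 2 - a ^ 2) := by
  have hsqrt : √(1 - (a / r) ^ 2) = √(r ^ 2 - a ^ 2) / r := by
    rw [div_pow, one_sub_div (by positivity), sqrt_div' _ (sq_nonneg r), sqrt_sq hr.le]
  rw [circularSegmentArea, arccos_eq_arctan (div_pos ha hr), hsqrt,
    div_div_div_cancel_right₀ hr.ne']

theorem lensArea_eq_circularSegmentArea_add {r₁ r₂ d : ℝ} (hr₁ : 0 < r₁) (hr₂ : 0 < r₂)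
    (h₁ : r₂ ^ 2 < d ^ 2 + r₁ ^ 2) (h₂ : r₁ ^ 2 < d ^ 2 + r₂ ^ 2) (hd : 0 < d) :
    lensArea r₁ r₂ d =
      circularSegmentArea r₁ ((d ^ 2 + r₁ ^ 2 - r₂ ^ 2) / (2 * d)) +
        circularSegmentArea r₂ ((d ^ 2 - r₁ ^ 2 + r₂ ^ 2) / (2 * d)) := by
  have hd2 : 0 < 2 * d := by positivity
  have hsqrt {s : ℝ}
      (hs : s = (d + r₁ + r₂) * (d + r₁ - r₂) * (d - r₁ + r₂) * (-d + r₁ + r₂) / (2 * d) ^ 2) :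
      √s = lensT r₁ r₂ d / (2 * d) := by
    rw [hs, sqrt_div' _ (sq_nonneg _), sqrt_sq hd2.le, lensT]
  rw [circularSegmentArea_eq_arctan hr₁ (div_pos (by linarith) hd2),
    circularSegmentArea_eq_arctan hr₂ (div_pos (by linarith) hd2),
    hsqrt (by field_simp; ring), hsqrt (by field_simp; ring), lensArea]
  field_simp
  ring

/-- When `r ^ 2 < u ^ 2` both sides vanish, the right one because `√` is `0` on negatives. -/
theorem volume_setOf_sq_add_sq_le (u r : ℝ) :
    volume {v : ℝ | u ^ 2 + v ^ 2 ≤ r ^ 2} = ENNReal.ofReal (2 * √(r ^ 2 - u ^ 2)) := by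
  rcases le_or_gt 0 (r ^ 2 - u ^ 2) with h | h
  · have : {v : ℝ | u ^ 2 + v ^ 2 ≤ r ^ 2} = Set.Icc (-√(r ^ 2 - u ^ 2)) √(r ^ 2 - u ^ 2) := by
      ext v
      rw [Set.mem_ofPred_eq, Set.mem_Icc, ← Real.sq_le h]
      constructor <;> intro <;> linarith
    rw [this, volume_Icc]
    ring_nf
  · have : {v : ℝ | u ^ 2 + v ^ 2 ≤ r ^ 2} = ∅ := by
      ext v
      simp only [Set.mem_ofPred_eq, Set.mem_empty_iff_false, iff_false, not_le]
      nlinarith [sq_nonneg v]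
    rw [this, sqrt_eq_zero'.2 h.le]
    simp

theorem volume_circularSegment {r a : ℝ} (hr : 0 < r) (ha : -r ≤ a) (har : a ≤ r) :
    volume {p : ℝ × ℝ | a ≤ p.1 ∧ p.1 ^ 2 + p.2 ^ 2 ≤ r ^ 2} =
      ENNReal.ofReal (circularSegmentArea r a) := by
  have hslice (u : ℝ) : volume (Prod.mk u ⁻¹' {p : ℝ × ℝ | a ≤ p.1 ∧ p.1 ^ 2 + p.2 ^ 2 ≤ r ^ 2}) =
      (Set.Icc a r).indicator (fun u => ENNReal.ofReal (2 * √(r ^ 2 - u ^ 2))) u := by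
    by_cases hu : u ∈ Set.Icc a r
    · rw [Set.indicator_of_mem hu, ← volume_setOf_sq_add_sq_le]
      congr 1
      ext v
      simp [hu.1]
    · rw [Set.indicator_of_notMem hu, measure_eq_zero_iff_ae_notMem]
      refine Filter.Eventually.of_forall fun v ⟨hau, hv⟩ => hu ⟨hau, ?_⟩
      nlinarith [sq_nonneg v]
  rw [Measure.volume_eq_prod, Measure.prod_apply (by measurability), lintegral_congr hslice,
    lintegral_indicator measurableSet_Icc, ← ofReal_integral_eq_lintegral_ofReal,
    integral_Icc_eq_integral_Ioc, ← intervalIntegral.integral_of_le har,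
    integral_two_mul_sqrt_sq_sub_sq hr ha har]
  · exact Continuous.integrableOn_Icc (by fun_prop)
  · exact Filter.Eventually.of_forall fun u => by positivity

theorem EuclideanSpace.volume_closedBall_inter_setOf_le_inner
    {c u : EuclideanSpace ℝ (Fin 2)} (hu : ‖u‖ = 1) {r a : ℝ} (hr : 0 < r) (ha : -r ≤ a)
    (har : a ≤ r) :
    volume (closedBall c r ∩ {y | a ≤ inner ℝ (y - c) u}) =
      ENNReal.ofReal (circularSegmentArea r a) := by
  set e₀ : EuclideanSpace ℝ (Fin 2) := EuclideanSpace.single 0 1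
  set ρ := (ℝ ∙ (u - e₀))ᗮ.reflection
  have hρu : ρ u = e₀ := Submodule.reflection_sub (by simp [e₀, hu])
  let f : EuclideanSpace ℝ (Fin 2) → ℝ × ℝ := fun y => (ρ (y - c) 0, ρ (y - c) 1)
  have hf : MeasurePreserving f :=
    (volume_preserving_finTwoArrow ℝ).comp ((PiLp.volume_preserving_ofLp _).comp
      (ρ.measurePreserving.comp (measurePreserving_sub_right volume c)))
  have hset : closedBall c r ∩ {y | a ≤ inner ℝ (y - c) u} =
      f ⁻¹' {p : ℝ × ℝ | a ≤ p.1 ∧ p.1 ^ 2 + p.2 ^ 2 ≤ r ^ 2} := by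
    ext y
    have h0 : inner ℝ (y - c) u = ρ (y - c) 0 := by
      rw [← ρ.inner_map_map, hρu]
      simp only [e₀, EuclideanSpace.inner_single_right, one_mul, conj_trivial]
    have hnorm : ‖y - c‖ ^ 2 = ρ (y - c) 0 ^ 2 + ρ (y - c) 1 ^ 2 := by
      rw [← ρ.norm_map, EuclideanSpace.norm_sq_eq, Fin.sum_univ_two, Real.norm_eq_abs,
        Real.norm_eq_abs, sq_abs, sq_abs]
    simp only [Set.mem_inter_iff, mem_closedBall, dist_eq_norm, Set.mem_ofPred_eq,
      Set.mem_preimage, f, h0, ← hnorm, sq_le_sq₀ (norm_nonneg _) hr.le]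
    exact and_comm
  rw [hset, hf.measure_preimage (by measurability), volume_circularSegment hr ha har]

theorem EuclideanSpace.volume_closedBall_inter_closedBall {a b : EuclideanSpace ℝ (Fin 2)}
    {r₁ r₂ : ℝ} (hr₁ : 0 < r₁) (hr₂ : 0 < r₂) (h₁ : r₂ ^ 2 < dist a b ^ 2 + r₁ ^ 2)
    (h₂ : r₁ ^ 2 < dist a b ^ 2 + r₂ ^ 2) (h₃ : dist a b < r₁ + r₂) :
    volume (closedBall a r₁ ∩ closedBall b r₂) = ENNReal.ofReal (lensArea r₁ r₂ (dist a b)) := by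
  set d := dist a b
  have hd : 0 < d := by nlinarith [dist_nonneg (x := a) (y := b)]
  have hab : a ≠ b := dist_pos.1 hd
  have hr₁d : r₁ < d + r₂ := by nlinarith
  have hr₂d : r₂ < d + r₁ := by nlinarith
  have hm₁ : 0 < (d ^ 2 + r₁ ^ 2 - r₂ ^ 2) / (2 * d) := div_pos (by linarith) (by positivity)
  have hm₂ : 0 < (d ^ 2 - r₁ ^ 2 + r₂ ^ 2) / (2 * d) := div_pos (by linarith) (by positivity)
  have hm₁r : (d ^ 2 + r₁ ^ 2 - r₂ ^ 2) / (2 * d) ≤ r₁ := by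
    rw [div_le_iff₀ (by positivity)]; nlinarith [mul_pos (sub_pos.2 h₃) (sub_pos.2 hr₁d)]
  have hm₂r : (d ^ 2 - r₁ ^ 2 + r₂ ^ 2) / (2 * d) ≤ r₂ := by
    rw [div_le_iff₀ (by positivity)]; nlinarith [mul_pos (sub_pos.2 h₃) (sub_pos.2 hr₂d)]
  rw [Measure.addHaar_closedBall_inter_closedBall_eq_add volume hab hr₁.le hr₂.le,
    volume_closedBall_inter_setOf_le_inner (norm_inv_dist_smul_sub hab) hr₁ (by linarith) hm₁r,
    volume_closedBall_inter_setOf_le_inner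
      (by rw [dist_comm]; exact norm_inv_dist_smul_sub hab.symm) hr₂ (by linarith) hm₂r,
    ← ENNReal.ofReal_add (circularSegmentArea_nonneg hr₁ (by linarith) hm₁r)
      (circularSegmentArea_nonneg hr₂ (by linarith) hm₂r),
    lensArea_eq_circularSegmentArea_add hr₁ hr₂ h₁ h₂ hd]

theorem sbs_association_probability_lens_general
    (k R_s : ℝ) (hk0 : 0 < k) (hk1 : k < 1) (hR : 0 < R_s)
    (x : EuclideanSpace ℝ (Fin 2))
    (h₁ : (k ^ 2 * ‖x‖ / (1 - k ^ 2)) ^ 2 + R_s ^ 2 > (k * ‖x‖ / (1 - k ^ 2)) ^ 2)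
    (h₂ : (k ^ 2 * ‖x‖ / (1 - k ^ 2)) ^ 2 + (k * ‖x‖ / (1 - k ^ 2)) ^ 2 > R_s ^ 2) :
    ((volume (closedBall x R_s))⁻¹ • volume.restrict (closedBall x R_s))
        {t : EuclideanSpace ℝ (Fin 2) | ‖t - x‖ ≤ k * ‖t‖} =
      ENNReal.ofReal
        (lensArea R_s (k * ‖x‖ / (1 - k ^ 2)) (k ^ 2 * ‖x‖ / (1 - k ^ 2)) /
          (π * R_s ^ 2)) := by
  have hk : 0 < 1 - k ^ 2 := by nlinarith
  have hx : 0 < ‖x‖ := by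
    refine (norm_nonneg x).lt_of_ne' fun h => ?_
    simp only [h, mul_zero, zero_div] at h₂
    nlinarith
  have hdist : dist x ((1 - k ^ 2)⁻¹ • x) = k ^ 2 * ‖x‖ / (1 - k ^ 2) := by
    rw [dist_eq_norm', show (1 - k ^ 2)⁻¹ • x - x = (k ^ 2 / (1 - k ^ 2)) • x by
      match_scalars; field_simp; ring, norm_smul, Real.norm_of_nonneg (by positivity)]
    ring
  have hd_le : k ^ 2 * ‖x‖ / (1 - k ^ 2) ≤ k * ‖x‖ / (1 - k ^ 2) := by
    gcongr
    nlinarith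
  rw [setOf_norm_sub_le_mul_norm_eq_closedBall x hk0.le hk1, Measure.smul_apply,
    Measure.restrict_apply measurableSet_closedBall, smul_eq_mul, Set.inter_comm,
    EuclideanSpace.volume_closedBall_inter_closedBall hR (by positivity) (by rw [hdist]; linarith)
      (by rw [hdist]; linarith) (by rw [hdist]; linarith),
    hdist, EuclideanSpace.volume_closedBall_fin_two, ← ENNReal.ofReal_pow hR.le,
    ← ENNReal.ofReal_mul (by positivity), ENNReal.ofReal_div_of_pos (by positivity),
    ENNReal.div_eq_inv_mul, mul_comm π]

/-- **Lemma 1, second (lens) case.** For `0 < k < 1`, `R_s > 0` and `x ∈ ℝ²` with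
`(1−k)R_s < k‖x‖ < (1+k)R_s` (and the arctan-validity conditions `d² + r₁² > r₂²`,
`d² + r₂² > r₁²` for `r₁ = R_s`, `r₂ = k‖x‖/(1−k²)`, `d = k²‖x‖/(1−k²)`), a point `U`
uniformly distributed on `closedBall(x, R_s)` associates to the SBS with probability
`C(r₁, r₂, d)/(π R_s²)`. -/
theorem sbs_association_probability_lens
    (k R_s : ℝ) (hk0 : 0 < k) (hk1 : k < 1) (hR : 0 < R_s)
    (x : EuclideanSpace ℝ (Fin 2))
    (hlow : (1 - k) * R_s < k * ‖x‖) (hhigh : k * ‖x‖ < (1 + k) * R_s)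
    (h₁ : (k ^ 2 * ‖x‖ / (1 - k ^ 2)) ^ 2 + R_s ^ 2 > (k * ‖x‖ / (1 - k ^ 2)) ^ 2)
    (h₂ : (k ^ 2 * ‖x‖ / (1 - k ^ 2)) ^ 2 + (k * ‖x‖ / (1 - k ^ 2)) ^ 2 > R_s ^ 2) :
    ((volume (closedBall x R_s))⁻¹ • volume.restrict (closedBall x R_s))
        {t : EuclideanSpace ℝ (Fin 2) | ‖t - x‖ ≤ k * ‖t‖} =
      ENNReal.ofReal
        (lensArea R_s (k * ‖x‖ / (1 - k ^ 2)) (k ^ 2 * ‖x‖ / (1 - k ^ 2)) /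
          (π * R_s ^ 2)) :=
  sbs_association_probability_lens_general k R_s hk0 hk1 hR x h₁ h₂
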